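/- If G is a nonzero dead left end, then under misère play G is a Left win (Left wins moving first or second); symmetrically, a nonzero dead right end is a Right win under misère play. -/

import Mathlib

universe u

/-- The type of pre-games, as defined in Mathlib (Dec 2024), since removed from Mathlib. -/
inductive SetTheory.PGame : Type (u + 1)
  | mk : ∀ α β : Type u, (α → SetTheory.PGame) → (β → SetTheory.PGame) → SetTheory.PGame

namespace SetTheory

namespace PGame

def LeftMoves : PGame → Type u
  | mk l _ _ _ => l

def RightMoves : PGame → Type u
  | mk _ r _ _ => r

def moveLeft : ∀ g : PGame, LeftMoves g → PGame
  | mk _l _ L _ => L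

def moveRight : ∀ g : PGame, RightMoves g → PGame
  | mk _ _r _ R => R

inductive IsOption : PGame → PGame → Prop
  | moveLeft {x : PGame} (i : x.LeftMoves) : IsOption (x.moveLeft i) x
  | moveRight {x : PGame} (i : x.RightMoves) : IsOption (x.moveRight i) x

instance : Zero PGame :=
  ⟨⟨PEmpty, PEmpty, PEmpty.elim, PEmpty.elim⟩⟩

def neg : PGame → PGame
  | ⟨l, r, L, R⟩ => ⟨r, l, fun i => neg (R i), fun i => neg (L i)⟩

instance : Neg PGame :=
  ⟨neg⟩

/-- Addition of pre-games, as in Mathlib (Dec 2024). -/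
noncomputable def add (x y : PGame.{u}) : PGame.{u} := by
  induction x generalizing y with | mk xl xr _ _ IHxl IHxr => _
  induction y with | mk yl yr yL yR IHyl IHyr => _
  have y := mk yl yr yL yR
  refine ⟨xl ⊕ yl, xr ⊕ yr, Sum.rec ?_ ?_, Sum.rec ?_ ?_⟩
  · exact fun i => IHxl i y
  · exact IHyl
  · exact fun i => IHxr i y
  · exact IHyr

noncomputable instance : Add PGame.{u} :=
  ⟨add⟩

end PGame

end SetTheory

open SetTheory

namespace Misere

/-- `F` is a follower of `G`: reachable from `G` by a (possibly empty) sequence of moves. -/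
def Follower (F G : PGame) : Prop := Relation.ReflTransGen PGame.IsOption F G

def IsLeftEnd (G : PGame) : Prop := IsEmpty G.LeftMoves
def IsRightEnd (G : PGame) : Prop := IsEmpty G.RightMoves

/-- A dead left end: every follower (including itself) is a left end. -/
def DeadLeftEnd (G : PGame) : Prop := ∀ F, Follower F G → IsLeftEnd F
def DeadRightEnd (G : PGame) : Prop := ∀ F, Follower F G → IsRightEnd F
def DeadEnd (G : PGame) : Prop := DeadLeftEnd G ∨ DeadRightEnd G

/-- A game is dead-ending if every end follower is a dead end. -/
def DeadEnding (G : PGame) : Prop :=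
  ∀ F, Follower F G → (IsLeftEnd F → DeadLeftEnd F) ∧ (IsRightEnd F → DeadRightEnd F)

/-- The universe of dead-ending games. -/
def E : Set PGame := {G | DeadEnding G}

/-- `(misereWins G).1` : Left, moving first, wins `G` under misère play;
    `(misereWins G).2` : Right, moving first, wins `G` under misère play. -/
def misereWins : PGame → Prop × Prop
  | PGame.mk l r L R =>
      (IsEmpty l ∨ ∃ i, ¬ (misereWins (L i)).2,
       IsEmpty r ∨ ∃ j, ¬ (misereWins (R j)).1)

def LeftWinsGF (G : PGame) : Prop := (misereWins G).1
def RightWinsGF (G : PGame) : Prop := (misereWins G).2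

inductive MOutcome : Type
  | L | N | P | R
deriving DecidableEq

/-- Partial order on misère outcomes: `R` minimal, `L` maximal, `N` and `P` incomparable. -/
def MOutcome.le : MOutcome → MOutcome → Prop
  | .R, _ => True
  | _, .L => True
  | a, b => a = b

instance : LE MOutcome := ⟨MOutcome.le⟩

/-- The misère outcome of a game. -/
noncomputable def outcome (G : PGame) : MOutcome := by
  classical
  exact if LeftWinsGF G then (if RightWinsGF G then .N else .L)
        else (if RightWinsGF G then .R else .P)

/-- `G ≡ H (mod U)`. -/
def equivMod (U : Set PGame) (G H : PGame) : Prop :=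
  ∀ X ∈ U, outcome (G + X) = outcome (H + X)

/-- `G ≧ H (mod U)`. -/
def geMod (U : Set PGame) (G H : PGame) : Prop :=
  ∀ X ∈ U, outcome (H + X) ≤ outcome (G + X)

/-- `LeftChain G n`: there is a sequence of `n` consecutive Left moves from `G`
ending at the zero position. -/
inductive LeftChain : PGame → ℕ → Prop
  | zero (G : PGame) : IsLeftEnd G → IsRightEnd G → LeftChain G 0
  | succ (G : PGame) (i : G.LeftMoves) (n : ℕ) :
      LeftChain (G.moveLeft i) n → LeftChain G (n + 1)

inductive RightChain : PGame → ℕ → Prop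
  | zero (G : PGame) : IsLeftEnd G → IsRightEnd G → RightChain G 0
  | succ (G : PGame) (j : G.RightMoves) (n : ℕ) :
      RightChain (G.moveRight j) n → RightChain G (n + 1)

/-- Left-length: minimum number of consecutive Left moves needed to reach zero. -/
noncomputable def leftLength (G : PGame) : ℕ := sInf {n | LeftChain G n}

/-- Right-length: minimum number of consecutive Right moves needed to reach zero. -/
noncomputable def rightLength (G : PGame) : ℕ := sInf {n | RightChain G n}

/-- Normal-play canonical form of a nonnegative integer. -/
def natGame : ℕ → PGame
  | 0 => 0
  | n + 1 => PGame.mk PUnit PEmpty (fun _ => natGame n) PEmpty.elim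

/-- Normal-play canonical form of an integer (negatives are conjugates). -/
def intGame (n : ℤ) : PGame :=
  if 0 ≤ n then natGame n.toNat else -natGame (-n).toNat

/-- Normal-play canonical form of the dyadic rational `m / 2 ^ j`. -/
def dyadicGame : ℤ → ℕ → PGame
  | m, 0 => intGame m
  | m, j + 1 =>
      if m % 2 = 0 then dyadicGame (m / 2) j
      else PGame.mk PUnit PUnit (fun _ => dyadicGame ((m - 1) / 2) j)
            (fun _ => dyadicGame ((m + 1) / 2) j)

/-- The closure of dead ends: finite disjunctive sums of dead ends. -/
def DeadEndClosure : Set PGame :=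
  {G | ∃ l : List PGame, (∀ x ∈ l, DeadEnd x) ∧ G = l.sum}

end Misere

open Misere SetTheory PGame

namespace Misere

theorem leftWinsGF_iff (G : PGame) :
    LeftWinsGF G ↔ IsLeftEnd G ∨ ∃ i, ¬ RightWinsGF (G.moveLeft i) := by
  cases G; rfl

theorem rightWinsGF_iff (G : PGame) :
    RightWinsGF G ↔ IsRightEnd G ∨ ∃ j, ¬ LeftWinsGF (G.moveRight j) := by
  cases G; rfl

theorem outcome_eq_L {G : PGame} (hL : LeftWinsGF G) (hR : ¬ RightWinsGF G) :
    outcome G = MOutcome.L := by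
  simp [outcome, hL, hR]

theorem outcome_eq_R {G : PGame} (hL : ¬ LeftWinsGF G) (hR : RightWinsGF G) :
    outcome G = MOutcome.R := by
  simp [outcome, hL, hR]

theorem DeadLeftEnd.isLeftEnd {G : PGame} (h : DeadLeftEnd G) : IsLeftEnd G :=
  h G Relation.ReflTransGen.refl

theorem DeadRightEnd.isRightEnd {G : PGame} (h : DeadRightEnd G) : IsRightEnd G :=
  h G Relation.ReflTransGen.refl

theorem DeadLeftEnd.of_isOption {F G : PGame} (h : DeadLeftEnd G) (hF : IsOption F G) :
    DeadLeftEnd F :=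
  fun H hH => h H (hH.tail hF)

theorem DeadRightEnd.of_isOption {F G : PGame} (h : DeadRightEnd G) (hF : IsOption F G) :
    DeadRightEnd F :=
  fun H hH => h H (hH.tail hF)

theorem leftWinsGF_of_isLeftEnd {G : PGame} (h : IsLeftEnd G) : LeftWinsGF G :=
  (leftWinsGF_iff G).2 (Or.inl h)

theorem rightWinsGF_of_isRightEnd {G : PGame} (h : IsRightEnd G) : RightWinsGF G :=
  (rightWinsGF_iff G).2 (Or.inl h)

/-- Every Right move leads to a left end, where Left, now first to move, has already won. -/
theorem DeadLeftEnd.not_rightWinsGF {G : PGame} (h : DeadLeftEnd G)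
    (hR : Nonempty G.RightMoves) : ¬ RightWinsGF G := by
  rw [rightWinsGF_iff]
  rintro (hEnd | ⟨j, hj⟩)
  · exact hEnd.false hR.some
  · exact hj (leftWinsGF_of_isLeftEnd (h.of_isOption (.moveRight j)).isLeftEnd)

theorem DeadRightEnd.not_leftWinsGF {G : PGame} (h : DeadRightEnd G)
    (hL : Nonempty G.LeftMoves) : ¬ LeftWinsGF G := by
  rw [leftWinsGF_iff]
  rintro (hEnd | ⟨i, hi⟩)
  · exact hEnd.false hL.some
  · exact hi (rightWinsGF_of_isRightEnd (h.of_isOption (.moveLeft i)).isRightEnd)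

end Misere

/-- A nonzero dead left end is in L⁻; a nonzero dead right end is in R⁻. -/
theorem stmt2 (G : PGame) :
    (DeadLeftEnd G → Nonempty G.RightMoves → outcome G = MOutcome.L) ∧
    (DeadRightEnd G → Nonempty G.LeftMoves → outcome G = MOutcome.R) :=
  ⟨fun h hR => outcome_eq_L (leftWinsGF_of_isLeftEnd h.isLeftEnd) (h.not_rightWinsGF hR),
   fun h hL => outcome_eq_R (h.not_leftWinsGF hL) (rightWinsGF_of_isRightEnd h.isRightEnd)⟩
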